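/- arXiv:1506.05102 — 6 statements merged into one kernel-verified Lean document; each statement's English description precedes it below -/
import Mathlib

section
/- Suppose ∂b_i/∂y^j = (ρ/L) h_{ij} where h_{ij} = L ∂²L/∂y^i∂y^j is the angular metric tensor and ρ is a constant. Then with L̄ = e^σ L + β, the angular metric tensor of L̄ satisfies h̄_{ij} = φ h_{ij}, where φ = (L̄/L)(e^σ + ρ) and h̄_{ij} = L̄ ∂²L̄/∂y^i∂y^j. -/
/-- Partial derivative with respect to the i-th fiber coordinate y^i. -/
noncomputable def pd {n : ℕ} (i : Fin n) (f : (Fin n → ℝ) → ℝ) : (Fin n → ℝ) → ℝ :=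
  fun y => fderiv ℝ f y (Pi.single i 1)

lemma pd_pd_eq {n : ℕ} (f : (Fin n → ℝ) → ℝ) (hf : ContDiff ℝ (⊤ : ℕ∞) f) (i j : Fin n)
    (y : Fin n → ℝ) :
    pd i (pd j f) y = fderiv ℝ (fderiv ℝ f) y (Pi.single i 1) (Pi.single j 1) := by
  have hdf : DifferentiableAt ℝ (fderiv ℝ f) y :=
    ((hf.fderiv_right (m := (⊤ : ℕ∞)) (by simp)).differentiable (by simp)) y
  unfold pd
  rw [fderiv_clm_apply hdf (differentiableAt_const _)]
  simp

lemma pd_comm {n : ℕ} (f : (Fin n → ℝ) → ℝ) (hf : ContDiff ℝ (⊤ : ℕ∞) f) (i j : Fin n)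
    (y : Fin n → ℝ) : pd i (pd j f) y = pd j (pd i f) y := by
  rw [pd_pd_eq f hf, pd_pd_eq f hf]
  exact (hf.contDiffAt.isSymmSndFDerivAt (by rw [minSmoothness_of_isRCLikeNormedField]; exact WithTop.coe_le_coe.mpr (le_top : (2 : ℕ∞) ≤ ⊤))) _ _

lemma pd_smooth {n : ℕ} (f : (Fin n → ℝ) → ℝ) (hf : ContDiff ℝ (⊤ : ℕ∞) f) (j : Fin n) :
    ContDiff ℝ (⊤ : ℕ∞) (pd j f) := by
  exact (hf.fderiv_right (by simp)).clm_apply contDiff_const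

/-- If ∂_j b_i = (ρ/L) h_{ij} with h_{ij} = L ∂_i∂_j L (ρ, σ constants),
then for L̄ = e^σ L + β the angular metric satisfies h̄_{ij} = φ h_{ij} with
φ = (L̄/L)(e^σ + ρ). -/
theorem stmt_1 {n : ℕ} (L β Lb : (Fin n → ℝ) → ℝ) (σ ρ : ℝ)
    (b : Fin n → (Fin n → ℝ) → ℝ)
    (hLs : ContDiff ℝ (⊤ : ℕ∞) L) (hβs : ContDiff ℝ (⊤ : ℕ∞) β)
    (hLpos : ∀ y, L y > 0)
    (hβb : ∀ i y, pd i β y = b i y)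
    (hb : ∀ i j y, pd j (b i) y = (ρ / L y) * (L y * pd i (pd j L) y))
    (hLb : Lb = fun y => Real.exp σ * L y + β y)
    (i j : Fin n) (y : Fin n → ℝ) :
    Lb y * pd i (pd j Lb) y
      = ((Lb y / L y) * (Real.exp σ + ρ)) * (L y * pd i (pd j L) y) := by
  have hbj : b j = pd j β := by funext z; exact (hβb j z).symm
  have h1 : pd j Lb = fun z => Real.exp σ * pd j L z + b j z := by
    funext z
    rw [hbj]
    unfold pd
    rw [hLb]
    rw [fderiv_fun_add ((hLs.differentiable (by simp) z).const_mul _)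
      (hβs.differentiable (by simp) z)]
    rw [fderiv_const_mul (hLs.differentiable (by simp) z)]
    simp
  have h2 : pd i (pd j Lb) y
      = Real.exp σ * pd i (pd j L) y + pd i (b j) y := by
    rw [h1]
    have hdL : DifferentiableAt ℝ (pd j L) y :=
      ((pd_smooth L hLs j).differentiable (by simp)) y
    have hdb : DifferentiableAt ℝ (b j) y := by
      rw [hbj]; exact ((pd_smooth β hβs j).differentiable (by simp)) y
    show fderiv ℝ (fun z => Real.exp σ * pd j L z + b j z) y (Pi.single i 1) = _
    rw [fderiv_fun_add (hdL.const_mul _) hdb, fderiv_const_mul hdL]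
    simp [pd]
  have h3 : pd i (b j) y = (ρ / L y) * (L y * pd i (pd j L) y) := by
    rw [hb j i y, pd_comm L hLs j i y]
  have hL0 : L y ≠ 0 := ne_of_gt (hLpos y)
  rw [h2, h3]
  field_simp
end

section
/- The Cartan tensor of the h-Randers conformally changed space can be written as C̄_{ijk} = Σ_{cyclic} H̄_{ij} C̄_k + V_{ijk}, where H̄_{ij} = h̄_{ij}/(n+1) and V_{ijk} = φ C_{ijk} − (φ/(n+1)) Σ_{cyclic} h_{ij} C_k; in particular, if V_{ijk} = 0 identically and H̄ is an indicatory symmetric tensor, the changed space is quasi-C-reducible. -/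
open Finset in
/-- C̄_{ijk} = Σ_{cyclic} H̄_{ij} C̄_k + V_{ijk} with H̄_{ij} = h̄_{ij}/(n+1)
and V_{ijk} = φ C_{ijk} − (φ/(n+1)) Σ_{cyclic} h_{ij} C_k; if V = 0 the changed
space is quasi-C-reducible. -/
theorem stmt_9 {n : ℕ} (C Cbar : Fin n → Fin n → Fin n → ℝ)
    (h hbar : Fin n → Fin n → ℝ) (Cv Cbarv m : Fin n → ℝ) (y : Fin n → ℝ)
    (L Lb σ ρ φ : ℝ) (hLpos : 0 < L) (hLbpos : 0 < Lb)
    (hφ : φ = L⁻¹ * Lb * (Real.exp σ + ρ))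
    (hCtrans : ∀ i j k, Cbar i j k = φ * C i j k
      + ((Real.exp σ + ρ) / (2 * L)) * (h i j * m k + h j k * m i + h k i * m j))
    (hCvtrans : ∀ k, Cbarv k = Cv k + (((n : ℝ) + 1) / (2 * Lb)) * m k)
    (hhbar : ∀ i j, hbar i j = φ * h i j)
    (hhsym : ∀ i j, h i j = h j i)
    (hhind : ∀ i, ∑ j, h i j * y j = 0)
    (HbarT : Fin n → Fin n → ℝ) (VT : Fin n → Fin n → Fin n → ℝ)
    (hHbar : ∀ i j, HbarT i j = hbar i j / ((n : ℝ) + 1))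
    (hV : ∀ i j k, VT i j k = φ * C i j k
      - (φ / ((n : ℝ) + 1)) * (h i j * Cv k + h j k * Cv i + h k i * Cv j)) :
    (∀ i j k, Cbar i j k
        = (HbarT i j * Cbarv k + HbarT j k * Cbarv i + HbarT k i * Cbarv j) + VT i j k)
    ∧ ((∀ i j k, VT i j k = 0) →
        ∃ Q : Fin n → Fin n → ℝ, (∀ i j, Q i j = Q j i)
          ∧ (∀ i, ∑ j, Q i j * y j = 0)
          ∧ ∀ i j k, Cbar i j k
              = Q i j * Cbarv k + Q j k * Cbarv i + Q k i * Cbarv j) := by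
  have hL : L ≠ 0 := ne_of_gt hLpos
  have hLb : Lb ≠ 0 := ne_of_gt hLbpos
  have hn : ((n : ℝ) + 1) ≠ 0 := by positivity
  have key : ∀ i j k, Cbar i j k
      = (HbarT i j * Cbarv k + HbarT j k * Cbarv i + HbarT k i * Cbarv j) + VT i j k := by
    intro i j k
    rw [hCtrans, hV, hHbar, hHbar, hHbar, hhbar, hhbar, hhbar, hCvtrans, hCvtrans, hCvtrans, hφ]
    field_simp
    ring
  refine ⟨key, fun hV0 => ⟨HbarT, ?_, ?_, ?_⟩⟩
  · intro i j; rw [hHbar, hHbar, hhbar, hhbar, hhsym]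
  · intro i
    have : ∀ j, HbarT i j * y j = (φ / ((n:ℝ)+1)) * (h i j * y j) := by
      intro j; rw [hHbar, hhbar]; ring
    simp only [this, ← Finset.mul_sum, hhind, mul_zero]
  · intro i j k
    have := key i j k
    rw [hV0] at this
    simpa using this
end

section
/- If the original Finsler space is C-reducible, i.e., C_{ijk} = (1/(n+1))(h_{ij} C_k + h_{jk} C_i + h_{ki} C_j), then the h-Randers conformally changed space is also C-reducible: C̄_{ijk} = (1/(n+1))(h̄_{ij} C̄_k + h̄_{jk} C̄_i + h̄_{ki} C̄_j). -/
/-- If the original space is C-reducible then the h-Randers conformally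
changed space is C-reducible. -/
theorem stmt_10 {n : ℕ} (C Cbar : Fin n → Fin n → Fin n → ℝ)
    (h hbar : Fin n → Fin n → ℝ) (Cv Cbarv m : Fin n → ℝ)
    (L Lb σ ρ φ : ℝ) (hLpos : 0 < L) (hLbpos : 0 < Lb) (hφne : φ ≠ 0)
    (hφ : φ = L⁻¹ * Lb * (Real.exp σ + ρ))
    (hCtrans : ∀ i j k, Cbar i j k = φ * C i j k
      + ((Real.exp σ + ρ) / (2 * L)) * (h i j * m k + h j k * m i + h k i * m j))
    (hCvtrans : ∀ k, Cbarv k = Cv k + (((n : ℝ) + 1) / (2 * Lb)) * m k)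
    (hhbar : ∀ i j, hbar i j = φ * h i j)
    (hCred : ∀ i j k, C i j k
      = (1 / ((n : ℝ) + 1)) * (h i j * Cv k + h j k * Cv i + h k i * Cv j)) :
    ∀ i j k, Cbar i j k
      = (1 / ((n : ℝ) + 1)) * (hbar i j * Cbarv k + hbar j k * Cbarv i + hbar k i * Cbarv j) := by
  intro i j k
  have hn : ((n : ℝ) + 1) ≠ 0 := by positivity
  rw [hCtrans, hCred, hCvtrans, hCvtrans, hCvtrans, hhbar, hhbar, hhbar, hφ]
  field_simp
  ring
end

section
/- More generally, the changed space is C-reducible if and only if φ C_{ijk} = Σ_{cyclic} h̄_{ij} N_k for the covector N_k = (1/(n+1)) C̄_k − (1/(2L̄)) m_k. -/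
/-- The changed space is C-reducible iff
φ C_{ijk} = Σ_{cyclic} h̄_{ij} N_k with N_k = C̄_k/(n+1) − m_k/(2L̄). -/
theorem stmt_11 {n : ℕ} (C Cbar : Fin n → Fin n → Fin n → ℝ)
    (h hbar : Fin n → Fin n → ℝ) (Cv Cbarv m N : Fin n → ℝ)
    (L Lb σ ρ φ : ℝ) (hLpos : 0 < L) (hLbpos : 0 < Lb) (hφne : φ ≠ 0)
    (hφ : φ = L⁻¹ * Lb * (Real.exp σ + ρ))
    (hCtrans : ∀ i j k, Cbar i j k = φ * C i j k
      + ((Real.exp σ + ρ) / (2 * L)) * (h i j * m k + h j k * m i + h k i * m j))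
    (hCvtrans : ∀ k, Cbarv k = Cv k + (((n : ℝ) + 1) / (2 * Lb)) * m k)
    (hhbar : ∀ i j, hbar i j = φ * h i j)
    (hN : ∀ k, N k = (1 / ((n : ℝ) + 1)) * Cbarv k - (1 / (2 * Lb)) * m k) :
    (∀ i j k, Cbar i j k
        = (1 / ((n : ℝ) + 1)) * (hbar i j * Cbarv k + hbar j k * Cbarv i + hbar k i * Cbarv j))
    ↔ (∀ i j k, φ * C i j k = hbar i j * N k + hbar j k * N i + hbar k i * N j) := by
  have hL := hLpos.ne'
  have hLb := hLbpos.ne'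
  have hn : ((n:ℝ)+1) ≠ 0 := by positivity
  have key : (Real.exp σ + ρ) / (2 * L) = φ / (2 * Lb) := by
    rw [hφ]; field_simp
  constructor <;> intro H i j k <;> have H' := H i j k <;>
    rw [hCtrans, key] at * <;>
    simp only [hN, hhbar] at * <;>
    field_simp at H' ⊢ <;> linarith [H']
end

section
/- If the v-curvature tensor S_{hijk} of the original Finsler space vanishes identically, then the v-curvature tensor of the h-Randers conformally changed space has the S4-like form S̄_{hijk} = (h̄_{hj}K_{ik} + h̄_{ik}K_{hj}) − (h̄_{hk}K_{ij} + h̄_{ij}K_{hk}), with K_{ij} = (1/(4L̄²)) m_i m_j − (1/2)(ρ/(LL̄) − m²/(4L̄²)) h_{ij}; moreover K is symmetric and indicatory (K_{ij} y^j = 0). -/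
open Finset in
/-- If S_{hijk} = 0 then the changed v-curvature tensor has the
S4-like form with K_{ij} = (1/(4L̄²)) m_i m_j − (1/2)(ρ/(LL̄) − m²/(4L̄²)) h_{ij},
and K is symmetric and indicatory. -/
theorem stmt_13 {n : ℕ} (S Sbar : Fin n → Fin n → Fin n → Fin n → ℝ)
    (hlow hbar : Fin n → Fin n → ℝ) (m y : Fin n → ℝ)
    (L Lb φ ρ m2 : ℝ) (hLpos : 0 < L) (hLbpos : 0 < Lb)
    (hhsym : ∀ i j, hlow i j = hlow j i)
    (hhy : ∀ i, ∑ j, hlow i j * y j = 0)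
    (hmy : ∑ i, m i * y i = 0)
    (hhbar : ∀ i j, hbar i j = φ * hlow i j)
    (hStrans : ∀ h i j k, Sbar h i j k = φ * (S h i j k
      + (ρ / (L * Lb) - m2 / (4 * Lb ^ 2)) * (hlow h k * hlow i j - hlow h j * hlow i k)
      + (1 / (4 * Lb ^ 2)) * (hlow h j * m i * m k - hlow h k * m i * m j
          + hlow i k * m h * m j - hlow i j * m h * m k)))
    (hS0 : ∀ h i j k, S h i j k = 0)
    (K : Fin n → Fin n → ℝ)
    (hK : ∀ i j, K i j = (1 / (4 * Lb ^ 2)) * m i * m j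
      - (1 / 2) * (ρ / (L * Lb) - m2 / (4 * Lb ^ 2)) * hlow i j) :
    (∀ h i j k, Sbar h i j k
        = (hbar h j * K i k + hbar i k * K h j) - (hbar h k * K i j + hbar i j * K h k))
    ∧ (∀ i j, K i j = K j i)
    ∧ (∀ i, ∑ j, K i j * y j = 0) := by
  refine ⟨fun h i j k => ?_, fun i j => by rw [hK, hK, hhsym]; ring, fun i => ?_⟩
  · rw [hStrans, hS0, hhbar h j, hhbar i k, hhbar h k, hhbar i j, hK i k, hK h j, hK i j, hK h k,
      hhsym i j, hhsym h k]
    ring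
  · have : ∀ j, K i j * y j = (1 / (4 * Lb ^ 2)) * m i * (m j * y j)
        - (1 / 2) * (ρ / (L * Lb) - m2 / (4 * Lb ^ 2)) * (hlow i j * y j) := by
      intro j; rw [hK]; ring
    simp only [this, Finset.sum_sub_distrib, ← Finset.mul_sum, hhy, hmy, mul_zero, sub_zero]
end

section
/- The v-curvature tensor of the changed space can be written as S̄_{hijk} = S̄ (h̄_{hj}h̄_{ik} − h̄_{hk}h̄_{ij}) + U_{hijk}, with scalar S̄ = −(1/φ)(ρ/(LL̄) − m²/(4L̄²)) and U_{hijk} = φ[S_{hijk} + (1/(4L̄²))(h_{hj}m_i m_k − h_{hk}m_i m_j + h_{ik}m_h m_j − h_{ij}m_h m_k)]. Consequently, if U_{hijk} = 0 identically then the changed space is S3-like. -/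
/-- Decomposition S̄_{hijk} = S̄ (h̄_{hj}h̄_{ik} − h̄_{hk}h̄_{ij}) + U_{hijk};
if U = 0 identically then the changed space is S3-like. -/
theorem stmt_14 {n : ℕ} (S Sbar : Fin n → Fin n → Fin n → Fin n → ℝ)
    (hlow hbar : Fin n → Fin n → ℝ) (m : Fin n → ℝ)
    (L Lb φ ρ m2 : ℝ) (hLpos : 0 < L) (hLbpos : 0 < Lb) (hφne : φ ≠ 0)
    (hhbar : ∀ i j, hbar i j = φ * hlow i j)
    (hStrans : ∀ h i j k, Sbar h i j k = φ * (S h i j k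
      + (ρ / (L * Lb) - m2 / (4 * Lb ^ 2)) * (hlow h k * hlow i j - hlow h j * hlow i k)
      + (1 / (4 * Lb ^ 2)) * (hlow h j * m i * m k - hlow h k * m i * m j
          + hlow i k * m h * m j - hlow i j * m h * m k)))
    (Sc : ℝ) (hSc : Sc = -(1 / φ) * (ρ / (L * Lb) - m2 / (4 * Lb ^ 2)))
    (U : Fin n → Fin n → Fin n → Fin n → ℝ)
    (hU : ∀ h i j k, U h i j k = φ * (S h i j k
      + (1 / (4 * Lb ^ 2)) * (hlow h j * m i * m k - hlow h k * m i * m j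
          + hlow i k * m h * m j - hlow i j * m h * m k))) :
    (∀ h i j k, Sbar h i j k
        = Sc * (hbar h j * hbar i k - hbar h k * hbar i j) + U h i j k)
    ∧ ((∀ h i j k, U h i j k = 0) →
        ∃ c : ℝ, ∀ h i j k, Lb ^ 2 * Sbar h i j k
          = c * (hbar h j * hbar i k - hbar h k * hbar i j)) := by
  have main : ∀ h i j k, Sbar h i j k
      = Sc * (hbar h j * hbar i k - hbar h k * hbar i j) + U h i j k := by
    intro h i j k
    rw [hStrans, hU, hSc, hhbar, hhbar, hhbar, hhbar]
    field_simp
    ring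
  refine ⟨main, fun hU0 => ⟨Lb ^ 2 * Sc, fun h i j k => ?_⟩⟩
  rw [main h i j k, hU0 h i j k]
  ring
end
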